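/- Let S be a set, A a nonempty finite set, d, l positive integers, H ≥ 1, β > 0, λ̃ > 0, L₁ > 0, ε > 0. Let φ : S × A → ℝ^d satisfy ‖φ(s,a)‖₂ ≤ 1 for all (s,a), and let r : S × A → [0,1] be a fixed function. Consider the function class 𝒱 of all functions V : S → ℝ of the form V(s) = max_{a ∈ A} min_{1 ≤ i ≤ l} min( H, r(s,a) + w_iᵀ φ(s,a) + β·√(φ(s,a)ᵀ Λ_i⁻¹ φ(s,a)) ), where w₁,…,w_l ∈ ℝ^d satisfy ‖w_i‖₂ ≤ L₁ and Λ₁,…,Λ_l are d×d positive definite matrices with Λ_i ⪰ λ̃·I_d. Then the ε-covering number N_ε of 𝒱 with respect to the sup distance dist(V₁, V₂) = sup_{s ∈ S} |V₁(s) − V₂(s)| satisfies log N_ε ≤ d·l·log(1 + 4L₁/ε) + d²·l·log(1 + 8√d·β² / (λ̃·ε²)). -/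

import Mathlib

open Matrix MeasureTheory Metric Finset Module WithLp
open scoped NNReal ENNReal RealInnerProductSpace

/-!
A member of the class is determined by the parameters `wᵢ` and `Bᵢ = β² Λᵢ⁻¹`, and it depends
on them in a nonexpansive way: `max`, `min` and truncation at `H` are 1-Lipschitz for the sup
distance, and for `‖φ‖ ≤ 1`, since `|√x - √y| ≤ √|x - y|`,
`|wᵀφ + √(φᵀBφ) - w'ᵀφ - √(φᵀB'φ)| ≤ ‖w - w'‖ + √‖B - B'‖` with the operator norm on matrices.
As `Λᵢ ⪰ λI` gives `‖β² Λᵢ⁻¹‖ ≤ β²/λ`, an `ε/2`-net of the `L₁`-ball of `ℝ^d` and an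
`ε²/4`-net of the `β²/λ`-ball of `d × d` matrices yield an `ε`-cover of the class. A maximal
`δ`-separated subset of a ball of radius `R` in an `n`-dimensional space is a `δ`-net, and the
disjoint balls of radius `δ/2` around its points fit in the ball of radius `R + δ/2`, so it has
at most `(1 + 2R/δ)^n` points. With the operator norm the matrix net is counted with
`8β²/(λε²)`, which is at most `8√d β²/(λε²)`.
-/

/-- The Euclidean norm of a vector in `ℝ^d`. -/
noncomputable def euclNorm {d : ℕ} (x : Fin d → ℝ) : ℝ := Real.sqrt (∑ i, x i ^ 2)

section Covering

variable {E : Type*} [NormedAddCommGroup E] [NormedSpace ℝ E] [FiniteDimensional ℝ E]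

theorem card_le_of_isSeparated_of_subset_closedBall {R : ℝ} {δ : ℝ≥0} (hR : 0 ≤ R)
    (hδ : 0 < δ) (T : Finset E) (hT : (T : Set E) ⊆ closedBall 0 R)
    (hsep : IsSeparated δ (T : Set E)) :
    (#T : ℝ) ≤ (1 + 2 * R / δ) ^ finrank ℝ E := by
  borelize E
  set μ : Measure E := Measure.addHaar
  set n := finrank ℝ E
  have hδ' : (0 : ℝ) < δ := hδ
  have hdisj : (T : Set E).PairwiseDisjoint fun t => closedBall t (δ / 2) := by
    intro x hx y hy hxy
    refine closedBall_disjoint_closedBall ?_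
    have : (δ : ℝ≥0∞) < edist x y := hsep hx hy hxy
    rw [edist_nndist, ENNReal.coe_lt_coe, ← NNReal.coe_lt_coe, coe_nndist] at this
    linarith
  have hsub : (⋃ t ∈ T, closedBall t (δ / 2)) ⊆ closedBall (0 : E) (R + δ / 2) :=
    Set.iUnion₂_subset fun t ht => closedBall_subset_closedBall' (by
      have := hT ht
      rw [mem_closedBall] at this
      linarith)
  have hvol : ∀ (x : E) {r : ℝ}, 0 ≤ r →
      μ (closedBall x r) = ENNReal.ofReal (r ^ n) * μ (closedBall 0 1) :=
    fun x r hr => μ.addHaar_closedBall' x hr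
  have key : (#T : ℝ≥0∞) * ENNReal.ofReal ((δ / 2) ^ n) * μ (closedBall 0 1)
      ≤ ENNReal.ofReal ((R + δ / 2) ^ n) * μ (closedBall 0 1) := by
    calc (#T : ℝ≥0∞) * ENNReal.ofReal ((δ / 2) ^ n) * μ (closedBall 0 1)
        = ∑ t ∈ T, μ (closedBall t (δ / 2)) := by
          simp only [hvol _ (half_pos hδ').le, sum_const, nsmul_eq_mul, mul_assoc]
      _ = μ (⋃ t ∈ T, closedBall t (δ / 2)) :=
          (measure_biUnion_finset hdisj fun t _ => measurableSet_closedBall).symm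
      _ ≤ μ (closedBall 0 (R + δ / 2)) := measure_mono hsub
      _ = _ := hvol _ (by positivity)
  have hball : μ (closedBall (0 : E) 1) ≠ 0 := (measure_closedBall_pos μ 0 one_pos).ne'
  rw [ENNReal.mul_le_mul_iff_left hball measure_closedBall_lt_top.ne, ← ENNReal.ofReal_natCast,
    ← ENNReal.ofReal_mul (by positivity), ENNReal.ofReal_le_ofReal_iff (by positivity),
    ← le_div_iff₀ (by positivity), ← div_pow] at key
  rwa [show (R + δ / 2) / (δ / 2) = 1 + 2 * R / δ by field_simp; ring] at key

theorem packingNumber_closedBall_le {R : ℝ} {δ : ℝ≥0} (hR : 0 ≤ R) (hδ : 0 < δ) :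
    packingNumber δ (closedBall (0 : E) R) ≤ ⌊(1 + 2 * R / δ) ^ finrank ℝ E⌋₊ := by
  refine iSup₂_le fun C hC => iSup_le fun hsep => ?_
  by_contra! hlt
  obtain ⟨t, htC, ht⟩ := Set.exists_subset_encard_eq
    (k := (⌊(1 + 2 * R / δ) ^ finrank ℝ E⌋₊ + 1 : ℕ))
    (by push_cast; exact Order.add_one_le_of_lt hlt)
  have hfin : t.Finite := Set.finite_of_encard_eq_coe ht
  have hcard := card_le_of_isSeparated_of_subset_closedBall hR hδ hfin.toFinset
    (by simpa using htC.trans hC) (by simpa using hsep.subset htC)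
  rw [← Set.ncard_eq_toFinset_card t hfin, Set.ncard_def, ht, ENat.toNat_natCast] at hcard
  push_cast at hcard
  linarith [Nat.lt_floor_add_one ((1 + 2 * R / δ) ^ finrank ℝ E)]

theorem exists_finset_dist_le_of_mem_closedBall {R δ : ℝ} (hR : 0 ≤ R) (hδ : 0 < δ) :
    ∃ T : Finset E, (∀ x ∈ closedBall (0 : E) R, ∃ y ∈ T, dist x y ≤ δ) ∧
      (#T : ℝ) ≤ (1 + 2 * R / δ) ^ finrank ℝ E := by
  have hpack := packingNumber_closedBall_le (E := E) hR (Real.toNNReal_pos.2 hδ)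
  rw [Real.coe_toNNReal _ hδ.le] at hpack
  have hne : packingNumber δ.toNNReal (closedBall (0 : E) R) ≠ ⊤ :=
    (hpack.trans_lt (ENat.natCast_lt_top _)).ne
  have hmax := (encard_maximalSeparatedSet hne).trans_le hpack
  have hfin : (maximalSeparatedSet δ.toNNReal (closedBall (0 : E) R)).Finite :=
    Set.finite_of_encard_le_coe hmax
  refine ⟨hfin.toFinset, fun x hx => ?_, ?_⟩
  · obtain ⟨y, hy, hxy⟩ := isCover_maximalSeparatedSet hne hx
    exact ⟨y, hfin.mem_toFinset.2 hy, (edist_le_ofReal hδ.le).1 hxy⟩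
  · have hcard := (Set.encard_le_coe_iff_finite_ncard_le.1 hmax).2
    rw [Set.ncard_eq_toFinset_card _ hfin] at hcard
    exact (Nat.cast_le.2 hcard).trans (Nat.floor_le (by positivity))

end Covering

section Matrix

open scoped Matrix.Norms.L2Operator

variable {n : Type*} [Fintype n]

theorem Matrix.mul_sqrt_dotProduct_mulVec {β : ℝ} (hβ : 0 ≤ β) (M : Matrix n n ℝ) (x : n → ℝ) :
    β * √(x ⬝ᵥ (M *ᵥ x)) = √(x ⬝ᵥ ((β ^ 2 • M) *ᵥ x)) := by
  rw [smul_mulVec, dotProduct_smul, smul_eq_mul, Real.sqrt_mul (sq_nonneg β), Real.sqrt_sq hβ]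

variable [DecidableEq n]

theorem Matrix.PosSemidef.mul_norm_le_norm_toEuclideanCLM {Λ : Matrix n n ℝ} {c : ℝ}
    (h : (Λ - c • 1).PosSemidef) (y : EuclideanSpace ℝ n) :
    c * ‖y‖ ≤ ‖toEuclideanCLM (𝕜 := ℝ) Λ y‖ := by
  have hquad : c * ‖y‖ ^ 2 ≤ ⟪y, toEuclideanCLM (𝕜 := ℝ) Λ y⟫ := by
    have := h.dotProduct_mulVec_nonneg (ofLp y)
    rw [inner_toEuclideanCLM, ← real_inner_self_eq_norm_sq,
      EuclideanSpace.inner_eq_star_dotProduct]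
    simpa only [star_trivial, sub_mulVec, smul_mulVec, one_mulVec, dotProduct_sub,
      dotProduct_smul, smul_eq_mul, sub_nonneg] using this
  have hcs := hquad.trans (real_inner_le_norm _ _)
  rcases (norm_nonneg y).eq_or_lt with hy | hy
  · rw [← hy, mul_zero]
    exact norm_nonneg _
  · nlinarith

theorem Matrix.l2_opNorm_inv_le_of_posSemidef_sub {Λ : Matrix n n ℝ} {c : ℝ} (hc : 0 < c)
    (h : (Λ - c • 1).PosSemidef) : ‖Λ⁻¹‖ ≤ c⁻¹ := by
  have hdet : IsUnit Λ.det := (isUnit_iff_isUnit_det Λ).1 <| mulVec_injective_iff_isUnit.1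
    fun x y hxy => by
      have := h.mul_norm_le_norm_toEuclideanCLM (toLp 2 (x - y))
      rw [toEuclideanCLM_toLp, mulVec_sub, hxy, sub_self, toLp_zero, norm_zero] at this
      have hxy0 : ‖toLp 2 (x - y)‖ ≤ 0 := by nlinarith [norm_nonneg (toLp 2 (x - y))]
      simpa [sub_eq_zero] using hxy0
  rw [cstar_norm_def]
  refine ContinuousLinearMap.opNorm_le_bound _ (inv_nonneg.2 hc.le) fun x => ?_
  have hx : toEuclideanCLM (𝕜 := ℝ) Λ (toEuclideanCLM (𝕜 := ℝ) Λ⁻¹ x) = x :=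
    ofLp_injective 2 (by simp [mulVec_mulVec, mul_nonsing_inv _ hdet])
  have hΛx := h.mul_norm_le_norm_toEuclideanCLM (toEuclideanCLM (𝕜 := ℝ) Λ⁻¹ x)
  rw [hx] at hΛx
  rwa [inv_mul_eq_div, le_div_iff₀' hc]

theorem Matrix.abs_dotProduct_mulVec_le (M : Matrix n n ℝ) (x : n → ℝ) :
    |x ⬝ᵥ (M *ᵥ x)| ≤ ‖M‖ * ‖toLp 2 x‖ ^ 2 := by
  rw [← inner_toEuclideanCLM, sq, ← mul_assoc, cstar_norm_def]
  exact (abs_real_inner_le_norm _ _).trans (by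
    rw [mul_comm]
    exact mul_le_mul_of_nonneg_right (ContinuousLinearMap.le_opNorm _ _) (norm_nonneg _))

end Matrix

theorem Real.abs_sqrt_sub_sqrt_le (x y : ℝ) : |√x - √y| ≤ √|x - y| := by
  have hx := Real.sqrt_nonneg x
  have hy := Real.sqrt_nonneg y
  refine Real.abs_le_sqrt ?_
  calc (√x - √y) ^ 2 = |√x - √y| * |√x - √y| := by rw [sq, abs_mul_abs_self]
    _ ≤ |√x - √y| * (√x + √y) :=
        mul_le_mul_of_nonneg_left (abs_sub_le_iff.2 ⟨by linarith, by linarith⟩) (abs_nonneg _)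
    _ = |√x ^ 2 - √y ^ 2| := by
        rw [← abs_of_nonneg (add_nonneg hx hy), ← abs_mul]
        congr 1
        ring
    _ ≤ |x - y| := by
        rw [Real.sq_sqrt', Real.sq_sqrt']
        exact abs_max_sub_max_le_abs x y 0

section Lattice

variable {κ : Type*} {s : Finset κ} {e : ℝ}

theorem Finset.abs_sup'_sub_sup'_le (hs : s.Nonempty) {f g : κ → ℝ}
    (h : ∀ a ∈ s, |f a - g a| ≤ e) : |s.sup' hs f - s.sup' hs g| ≤ e := by
  have key : ∀ f g : κ → ℝ, (∀ a ∈ s, |f a - g a| ≤ e) → s.sup' hs f ≤ s.sup' hs g + e :=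
    fun f g h => sup'_le _ _ fun a ha => by linarith [le_sup' g ha, (abs_le.1 (h a ha)).2]
  have := key g f fun a ha => abs_sub_comm (f a) (g a) ▸ h a ha
  exact abs_sub_le_iff.2 ⟨by linarith [key f g h], by linarith⟩

theorem Finset.abs_inf'_sub_inf'_le (hs : s.Nonempty) {f g : κ → ℝ}
    (h : ∀ a ∈ s, |f a - g a| ≤ e) : |s.inf' hs f - s.inf' hs g| ≤ e := by
  have key : ∀ f g : κ → ℝ, (∀ a ∈ s, |f a - g a| ≤ e) → s.inf' hs f - e ≤ s.inf' hs g :=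
    fun f g h => le_inf' _ _ fun a ha => by linarith [inf'_le f ha, (abs_le.1 (h a ha)).2]
  have := key g f fun a ha => abs_sub_comm (f a) (g a) ▸ h a ha
  exact abs_sub_le_iff.2 ⟨by linarith [key f g h], by linarith⟩

end Lattice

theorem log_card_image_piFinset_product_le {ι α γ δ : Type*} [Fintype ι] [DecidableEq ι]
    [DecidableEq δ] (F : (ι → α) × (ι → γ) → δ)
    {W : Finset α} {M : Finset γ} (hW : W.Nonempty) (hM : M.Nonempty) {a b : ℝ}
    (ha : (#W : ℝ) ≤ a) (hb : (#M : ℝ) ≤ b) :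
    Real.log #(((Fintype.piFinset fun _ => W) ×ˢ (Fintype.piFinset fun _ => M)).image F)
      ≤ Fintype.card ι * (Real.log a + Real.log b) := by
  have hpos : 0 < #(((Fintype.piFinset fun _ : ι => W) ×ˢ
      (Fintype.piFinset fun _ => M)).image F) := by
    simp [card_pos, Fintype.piFinset_nonempty, hW, hM]
  have hWpos : (0 : ℝ) < #W := by exact_mod_cast hW.card_pos
  have hMpos : (0 : ℝ) < #M := by exact_mod_cast hM.card_pos
  calc _ ≤ Real.log ((#W * #M) ^ Fintype.card ι : ℕ) := by
        refine Real.log_le_log (by exact_mod_cast hpos) (Nat.cast_le.2 (card_image_le.trans ?_))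
        simp [card_product, Fintype.card_piFinset, mul_pow]
    _ ≤ _ := by
        push_cast
        rw [Real.log_pow, Real.log_mul hWpos.ne' hMpos.ne']
        gcongr

theorem euclNorm_eq_norm_toLp {d : ℕ} (x : Fin d → ℝ) : euclNorm x = ‖toLp 2 x‖ := by
  simp [euclNorm, EuclideanSpace.norm_eq]

section OptimisticValue

open scoped Matrix.Norms.L2Operator

variable {S A ι n : Type*} [Fintype A] [Nonempty A] [Fintype ι] [Nonempty ι]
  [Fintype n] [DecidableEq n]

theorem abs_dotProduct_add_sqrt_quad_sub_le {x : n → ℝ} (hx : ‖toLp 2 x‖ ≤ 1)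
    (w w' : n → ℝ) (B B' : Matrix n n ℝ) :
    |(w ⬝ᵥ x + √(x ⬝ᵥ (B *ᵥ x))) - (w' ⬝ᵥ x + √(x ⬝ᵥ (B' *ᵥ x)))|
      ≤ ‖toLp 2 (w - w')‖ + √‖B - B'‖ := by
  have hlin : |(w - w') ⬝ᵥ x| ≤ ‖toLp 2 (w - w')‖ := by
    rw [← star_trivial x, ← EuclideanSpace.inner_toLp_toLp]
    exact (abs_real_inner_le_norm _ _).trans (mul_le_of_le_one_left (norm_nonneg _) hx)
  have hquad : |x ⬝ᵥ (B *ᵥ x) - x ⬝ᵥ (B' *ᵥ x)| ≤ ‖B - B'‖ := by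
    rw [← dotProduct_sub, ← sub_mulVec]
    exact (abs_dotProduct_mulVec_le _ x).trans
      (mul_le_of_le_one_right (norm_nonneg _) (pow_le_one₀ (norm_nonneg _) hx))
  calc _ = |(w - w') ⬝ᵥ x + (√(x ⬝ᵥ (B *ᵥ x)) - √(x ⬝ᵥ (B' *ᵥ x)))| := by
        rw [sub_dotProduct]
        ring_nf
    _ ≤ |(w - w') ⬝ᵥ x| + |√(x ⬝ᵥ (B *ᵥ x)) - √(x ⬝ᵥ (B' *ᵥ x))| := abs_add_le _ _
    _ ≤ _ := add_le_add hlin ((Real.abs_sqrt_sub_sqrt_le _ _).trans (Real.sqrt_le_sqrt hquad))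

/-- The paper's `β √(φᵀ Λᵢ⁻¹ φ)` is encoded as `√(φᵀ Bᵢ φ)` with `Bᵢ = β² Λᵢ⁻¹`. -/
noncomputable def optimisticValue (H : ℝ) (r : S → A → ℝ) (φ : S → A → n → ℝ)
    (w : ι → n → ℝ) (B : ι → Matrix n n ℝ) (s : S) : ℝ :=
  univ.sup' univ_nonempty fun a => univ.inf' univ_nonempty fun i =>
    min H (r s a + w i ⬝ᵥ φ s a + √(φ s a ⬝ᵥ (B i *ᵥ φ s a)))

theorem abs_optimisticValue_sub_le {H : ℝ} {r : S → A → ℝ} {φ : S → A → n → ℝ}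
    (hφ : ∀ s a, ‖toLp 2 (φ s a)‖ ≤ 1) {w w' : ι → n → ℝ} {B B' : ι → Matrix n n ℝ}
    {δ₁ δ₂ : ℝ} (hw : ∀ i, ‖toLp 2 (w i - w' i)‖ ≤ δ₁) (hB : ∀ i, ‖B i - B' i‖ ≤ δ₂) (s : S) :
    |optimisticValue H r φ w B s - optimisticValue H r φ w' B' s| ≤ δ₁ + √δ₂ := by
  refine abs_sup'_sub_sup'_le _ fun a _ => abs_inf'_sub_inf'_le _ fun i _ => ?_
  refine (abs_min_sub_min_le_max _ _ _ _).trans ?_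
  rw [sub_self, abs_zero, max_eq_right (abs_nonneg _), add_assoc, add_assoc,
    add_sub_add_left_eq_sub]
  exact (abs_dotProduct_add_sqrt_quad_sub_le (hφ s a) _ _ _ _).trans
    (add_le_add (hw i) (Real.sqrt_le_sqrt (hB i)))

theorem exists_finset_abs_optimisticValue_sub_le (H : ℝ) (r : S → A → ℝ)
    {φ : S → A → n → ℝ} (hφ : ∀ s a, ‖toLp 2 (φ s a)‖ ≤ 1) {L R ε : ℝ} (hL : 0 ≤ L)
    (hR : 0 ≤ R) (hε : 0 < ε) :
    ∃ C : Finset (S → ℝ),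
      (∀ (w : ι → n → ℝ) (B : ι → Matrix n n ℝ), (∀ i, ‖toLp 2 (w i)‖ ≤ L) →
        (∀ i, ‖B i‖ ≤ R) → ∃ g ∈ C, ∀ s, |optimisticValue H r φ w B s - g s| ≤ ε) ∧
      Real.log #C ≤ Fintype.card ι * (Fintype.card n * Real.log (1 + 4 * L / ε)
        + Fintype.card n ^ 2 * Real.log (1 + 8 * R / ε ^ 2)) := by
  classical
  obtain ⟨W, hW, hWcard⟩ :=
    exists_finset_dist_le_of_mem_closedBall (E := EuclideanSpace ℝ n) hL (half_pos hε)
  obtain ⟨M, hM, hMcard⟩ := exists_finset_dist_le_of_mem_closedBall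
    (E := Matrix n n ℝ) hR (by positivity : 0 < ε ^ 2 / 4)
  refine ⟨((Fintype.piFinset fun _ : ι => W) ×ˢ (Fintype.piFinset fun _ : ι => M)).image
    fun p => optimisticValue H r φ (fun i => ofLp (p.1 i)) p.2, fun w B hw hB => ?_, ?_⟩
  · choose w' hw' hww' using fun i => hW (toLp 2 (w i)) (mem_closedBall_zero_iff.2 (hw i))
    choose B' hB' hBB' using fun i => hM (B i) (mem_closedBall_zero_iff.2 (hB i))
    refine ⟨_, mem_image_of_mem _ (a := (w', B')) (mem_product.2
      ⟨Fintype.mem_piFinset.2 hw', Fintype.mem_piFinset.2 hB'⟩), fun s => ?_⟩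
    calc _ ≤ ε / 2 + √(ε ^ 2 / 4) := by
          refine abs_optimisticValue_sub_le hφ (fun i => ?_)
            (fun i => (dist_eq_norm _ _).symm.trans_le (hBB' i)) s
          rw [toLp_sub, toLp_ofLp, ← dist_eq_norm]
          exact hww' i
      _ = ε := by
          rw [show ε ^ 2 / 4 = (ε / 2) ^ 2 by ring, Real.sqrt_sq (half_pos hε).le]
          ring
  · obtain ⟨w₀, hw₀, -⟩ := hW 0 (mem_closedBall_self hL)
    obtain ⟨B₀, hB₀, -⟩ := hM 0 (mem_closedBall_self hR)
    rw [finrank_euclideanSpace, show 1 + 2 * L / (ε / 2) = 1 + 4 * L / ε by ring] at hWcard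
    rw [finrank_matrix, finrank_self, mul_one, show 2 * R / (ε ^ 2 / 4) = 8 * R / ε ^ 2 by ring]
      at hMcard
    refine (log_card_image_piFinset_product_le _ ⟨w₀, hw₀⟩ ⟨B₀, hB₀⟩ hWcard hMcard).trans_eq ?_
    rw [Real.log_pow, Real.log_pow]
    push_cast
    ring

end OptimisticValue

theorem stmt_11_general {S A : Type*} [Fintype A] [Nonempty A]
    (d l : ℕ) (hd : 0 < d) (hl : 0 < l)
    (H β lam L₁ ε : ℝ) (hβ : 0 < β) (hlam : 0 < lam) (hL₁ : 0 < L₁)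
    (hε : 0 < ε)
    (φ : S → A → Fin d → ℝ) (hφ : ∀ s a, euclNorm (φ s a) ≤ 1)
    (r : S → A → ℝ)
    (𝒱 : Set (S → ℝ))
    (h𝒱 : 𝒱 = {V | ∃ (w : Fin l → Fin d → ℝ) (Λ : Fin l → Matrix (Fin d) (Fin d) ℝ),
      (∀ i, euclNorm (w i) ≤ L₁) ∧
      (∀ i, (Λ i).PosDef ∧ (Λ i - lam • (1 : Matrix (Fin d) (Fin d) ℝ)).PosSemidef) ∧
      ∀ s, V s = Finset.univ.sup' (Finset.univ_nonempty (α := A)) (fun a : A =>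
        Finset.univ.inf' ⟨⟨0, hl⟩, Finset.mem_univ _⟩ (fun i : Fin l =>
          min H (r s a + w i ⬝ᵥ φ s a
            + β * Real.sqrt (φ s a ⬝ᵥ ((Λ i)⁻¹ *ᵥ φ s a)))))}) :
    ∃ C : Finset (S → ℝ),
      (∀ V ∈ 𝒱, ∃ g ∈ C, ∀ s, |V s - g s| ≤ ε) ∧
      Real.log C.card ≤ d * l * Real.log (1 + 4 * L₁ / ε)
        + d ^ 2 * l * Real.log (1 + 8 * Real.sqrt d * β ^ 2 / (lam * ε ^ 2)) := by
  have : NeZero l := ⟨hl.ne'⟩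
  obtain ⟨C, hC, hCcard⟩ := exists_finset_abs_optimisticValue_sub_le (ι := Fin l) H r
    (fun s a => (euclNorm_eq_norm_toLp _).symm.trans_le (hφ s a)) hL₁.le
    (div_nonneg (sq_nonneg β) hlam.le) hε
  refine ⟨C, ?_, ?_⟩
  · rintro V hV
    rw [h𝒱] at hV
    obtain ⟨w, Λ, hw, hΛ, hV⟩ := hV
    obtain ⟨g, hg, hVg⟩ := hC w (fun i => β ^ 2 • (Λ i)⁻¹)
      (fun i => (euclNorm_eq_norm_toLp _).symm.trans_le (hw i)) fun i => by
        open scoped Matrix.Norms.L2Operator in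
        rw [norm_smul, Real.norm_of_nonneg (sq_nonneg β), div_eq_mul_inv]
        exact mul_le_mul_of_nonneg_left (l2_opNorm_inv_le_of_posSemidef_sub hlam (hΛ i).2)
          (sq_nonneg β)
    refine ⟨g, hg, fun s => ?_⟩
    simpa only [hV s, optimisticValue, mul_sqrt_dotProduct_mulVec hβ.le] using hVg s
  · have hsqrt : 8 * (β ^ 2 / lam) / ε ^ 2 ≤ 8 * √d * β ^ 2 / (lam * ε ^ 2) := by
      have hd1 : 1 ≤ √(d : ℝ) := Real.one_le_sqrt.2 (Nat.one_le_cast.2 hd)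
      rw [show 8 * (β ^ 2 / lam) / ε ^ 2 = 8 * β ^ 2 / (lam * ε ^ 2) by field_simp]
      exact div_le_div_of_nonneg_right (by nlinarith [sq_nonneg β]) (by positivity)
    calc _ ≤ _ := hCcard
      _ = d * l * Real.log (1 + 4 * L₁ / ε)
          + d ^ 2 * l * Real.log (1 + 8 * (β ^ 2 / lam) / ε ^ 2) := by
        simp only [Fintype.card_fin]
        ring
      _ ≤ _ := by gcongr

/-- **Covering number of the optimistic value function class.** The class of functions
`V(s) = max_a min_{1≤i≤l} min(H, r(s,a) + w_iᵀ φ(s,a) + β √(φ(s,a)ᵀ Λ_i⁻¹ φ(s,a)))`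
with `‖w_i‖₂ ≤ L₁` and `Λ_i ⪰ λ̃ I` positive definite admits an `ε`-cover `C` in the sup
distance with `log |C| ≤ d l log(1 + 4L₁/ε) + d² l log(1 + 8√d β²/(λ̃ ε²))`. -/
theorem stmt_11 {S A : Type*} [Fintype A] [Nonempty A]
    (d l : ℕ) (hd : 0 < d) (hl : 0 < l)
    (H β lam L₁ ε : ℝ) (hH : 1 ≤ H) (hβ : 0 < β) (hlam : 0 < lam) (hL₁ : 0 < L₁)
    (hε : 0 < ε)
    (φ : S → A → Fin d → ℝ) (hφ : ∀ s a, euclNorm (φ s a) ≤ 1)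
    (r : S → A → ℝ) (hr : ∀ s a, r s a ∈ Set.Icc (0 : ℝ) 1)
    (𝒱 : Set (S → ℝ))
    (h𝒱 : 𝒱 = {V | ∃ (w : Fin l → Fin d → ℝ) (Λ : Fin l → Matrix (Fin d) (Fin d) ℝ),
      (∀ i, euclNorm (w i) ≤ L₁) ∧
      (∀ i, (Λ i).PosDef ∧ (Λ i - lam • (1 : Matrix (Fin d) (Fin d) ℝ)).PosSemidef) ∧
      ∀ s, V s = Finset.univ.sup' (Finset.univ_nonempty (α := A)) (fun a : A =>
        Finset.univ.inf' ⟨⟨0, hl⟩, Finset.mem_univ _⟩ (fun i : Fin l =>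
          min H (r s a + w i ⬝ᵥ φ s a
            + β * Real.sqrt (φ s a ⬝ᵥ ((Λ i)⁻¹ *ᵥ φ s a)))))}) :
    ∃ C : Finset (S → ℝ),
      (∀ V ∈ 𝒱, ∃ g ∈ C, ∀ s, |V s - g s| ≤ ε) ∧
      Real.log C.card ≤ d * l * Real.log (1 + 4 * L₁ / ε)
        + d ^ 2 * l * Real.log (1 + 8 * Real.sqrt d * β ^ 2 / (lam * ε ^ 2)) :=
  stmt_11_general d l hd hl H β lam L₁ ε hβ hlam hL₁ hε φ hφ r 𝒱 h𝒱
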